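/- arXiv:1408.4551 — 2 statements merged into one kernel-verified Lean document; each statement's English description precedes it below -/
import Mathlib

section
/- Let f : ℝⁿ → ℝᵏ be a linear map, let u, v ∈ ℝⁿ be nonzero, set u' = u/‖u‖ and v' = v/‖v‖, and let 0 < ε < 1. Suppose that (1−ε)‖u'+v'‖² ≤ ‖f(u'+v')‖² ≤ (1+ε)‖u'+v'‖² and (1−ε)‖u'−v'‖² ≤ ‖f(u'−v')‖² ≤ (1+ε)‖u'−v'‖². Then |uᵀv − f(u)ᵀf(v)| ≤ ε‖u‖‖v‖. -/
/-!
By polarization, `4⟪x, y⟫ = ‖x + y‖² - ‖x - y‖²` and likewise for `f x, f y`, so the error in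
the inner product is a quarter of the difference of the errors on `‖x + y‖²` and `‖x - y‖²`.
These are at most `ε‖x + y‖²` and `ε‖x - y‖²`, whose sum is `2ε(‖x‖² + ‖y‖²)` by the parallelogram
law, i.e. `4ε` for the unit vectors `u'`, `v'`. Bilinearity then rescales to `u`, `v`.
-/

open scoped RealInnerProductSpace

section

variable {E F : Type*} [NormedAddCommGroup E] [InnerProductSpace ℝ E]
  [NormedAddCommGroup F] [InnerProductSpace ℝ F]

theorem abs_inner_sub_inner_map_le (f : E →ₗ[ℝ] F) {x y : E} {ε : ℝ}
    (hadd : (1 - ε) * ‖x + y‖ ^ 2 ≤ ‖f (x + y)‖ ^ 2 ∧ ‖f (x + y)‖ ^ 2 ≤ (1 + ε) * ‖x + y‖ ^ 2)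
    (hsub : (1 - ε) * ‖x - y‖ ^ 2 ≤ ‖f (x - y)‖ ^ 2 ∧ ‖f (x - y)‖ ^ 2 ≤ (1 + ε) * ‖x - y‖ ^ 2) :
    |⟪x, y⟫ - ⟪f x, f y⟫| ≤ ε * (‖x‖ ^ 2 + ‖y‖ ^ 2) / 2 := by
  rw [map_add, norm_add_sq_real, norm_add_sq_real] at hadd
  rw [map_sub, norm_sub_sq_real, norm_sub_sq_real] at hsub
  rw [abs_le]
  constructor <;> linarith [hadd.1, hadd.2, hsub.1, hsub.2]

theorem inner_smul_sub_inner_map_smul (f : E →ₗ[ℝ] F) (a b : ℝ) (x y : E) :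
    ⟪a • x, b • y⟫ - ⟪f (a • x), f (b • y)⟫ = a * b * (⟪x, y⟫ - ⟪f x, f y⟫) := by
  simp only [map_smul, real_inner_smul_left, real_inner_smul_right]
  ring

end

theorem stmt_5_general (n k : ℕ)
    (f : EuclideanSpace ℝ (Fin n) →ₗ[ℝ] EuclideanSpace ℝ (Fin k))
    (u v : EuclideanSpace ℝ (Fin n)) (hu : u ≠ 0) (hv : v ≠ 0)
    (u' v' : EuclideanSpace ℝ (Fin n)) (hu' : u' = ‖u‖⁻¹ • u) (hv' : v' = ‖v‖⁻¹ • v)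
    (ε : ℝ)
    (h1 : (1 - ε) * ‖u' + v'‖ ^ 2 ≤ ‖f (u' + v')‖ ^ 2 ∧
      ‖f (u' + v')‖ ^ 2 ≤ (1 + ε) * ‖u' + v'‖ ^ 2)
    (h2 : (1 - ε) * ‖u' - v'‖ ^ 2 ≤ ‖f (u' - v')‖ ^ 2 ∧
      ‖f (u' - v')‖ ^ 2 ≤ (1 + ε) * ‖u' - v'‖ ^ 2) :
    |⟪u, v⟫ - ⟪f u, f v⟫| ≤ ε * ‖u‖ * ‖v‖ := by
  have hu'1 : ‖u'‖ = 1 := hu' ▸ norm_smul_inv_norm (𝕜 := ℝ) hu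
  have hv'1 : ‖v'‖ = 1 := hv' ▸ norm_smul_inv_norm (𝕜 := ℝ) hv
  have hunit : |⟪u', v'⟫ - ⟪f u', f v'⟫| ≤ ε :=
    (abs_inner_sub_inner_map_le f h1 h2).trans_eq (by rw [hu'1, hv'1]; ring)
  have hu_eq : u = ‖u‖ • u' := by rw [hu', smul_inv_smul₀ (norm_ne_zero_iff.mpr hu)]
  have hv_eq : v = ‖v‖ • v' := by rw [hv', smul_inv_smul₀ (norm_ne_zero_iff.mpr hv)]
  calc |⟪u, v⟫ - ⟪f u, f v⟫| = ‖u‖ * ‖v‖ * |⟪u', v'⟫ - ⟪f u', f v'⟫| := by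
        rw [hu_eq, hv_eq, inner_smul_sub_inner_map_smul, abs_mul, abs_of_nonneg (by positivity),
          ← hu_eq, ← hv_eq]
    _ ≤ ‖u‖ * ‖v‖ * ε := by gcongr
    _ = ε * ‖u‖ * ‖v‖ := by ring

/-- **deterministic core of inner-product preservation.** If a linear map
`f : ℝⁿ → ℝᵏ` distorts the squared norms of `u' + v'` and `u' - v'` (where `u' = u/‖u‖`,
`v' = v/‖v‖`) by a factor at most `1 ± ε`, then `|uᵀv - f(u)ᵀf(v)| ≤ ε‖u‖‖v‖`. -/
theorem stmt_5 (n k : ℕ)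
    (f : EuclideanSpace ℝ (Fin n) →ₗ[ℝ] EuclideanSpace ℝ (Fin k))
    (u v : EuclideanSpace ℝ (Fin n)) (hu : u ≠ 0) (hv : v ≠ 0)
    (u' v' : EuclideanSpace ℝ (Fin n)) (hu' : u' = ‖u‖⁻¹ • u) (hv' : v' = ‖v‖⁻¹ • v)
    (ε : ℝ) (hε0 : 0 < ε) (hε1 : ε < 1)
    (h1 : (1 - ε) * ‖u' + v'‖ ^ 2 ≤ ‖f (u' + v')‖ ^ 2 ∧
      ‖f (u' + v')‖ ^ 2 ≤ (1 + ε) * ‖u' + v'‖ ^ 2)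
    (h2 : (1 - ε) * ‖u' - v'‖ ^ 2 ≤ ‖f (u' - v')‖ ^ 2 ∧
      ‖f (u' - v')‖ ^ 2 ≤ (1 + ε) * ‖u' - v'‖ ^ 2) :
    |⟪u, v⟫ - ⟪f u, f v⟫| ≤ ε * ‖u‖ * ‖v‖ :=
  stmt_5_general n k f u v hu hv u' v' hu' hv' ε h1 h2
end

section
/- Let n > k ≥ 1, let K ⊆ ℝⁿ be a compact polytope with extreme point set ext(K), let M ∈ ℝ^{n×n}, q ∈ ℝⁿ, let R ∈ ℝ^{n×k} be any matrix, and set f(u) = √(n/k)·Rᵀu, K̃ = f(K), M̃ = RᵀMR, q̃ = √(n/k)·Rᵀq, and M' = MRRᵀ. Let x₀ ∈ K, let ε ∈ (0,1), and suppose: (i) x̃ = √(n/k)·Rᵀx₀ is a solution of AVI(K̃, M̃, q̃); and (ii) for every x_e ∈ ext(K), |(x_e − x₀)ᵀ(q + Mx₀) − f(x_e − x₀)ᵀ f(q + Mx₀)| ≤ ε‖x_e − x₀‖‖q + Mx₀‖. Then for every x_e ∈ ext(K): (x_e − x₀)ᵀ(q + Mx₀) ≥ (n/k)·(x_e − x₀)ᵀ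 RRᵀ(M − M')x₀ − ε‖x_e − x₀‖‖q + Mx₀‖. -/
/-!
Write `c = √(n/k)` and `w = q + Mx₀`. Expanding the projected residual gives the exact identity
`⟪f(x_e - x₀), f w⟫ = ⟪f x_e - f x₀, M̃ (f x₀) + q̃⟫ + c² ⟪x_e - x₀, RRᵀ(M - MRRᵀ)x₀⟫`,
because `M̃ (f x₀) = c RᵀMRRᵀx₀` differs from `f(Mx₀) = c RᵀMx₀` exactly by `c Rᵀ(M - M')x₀`.
The first term is nonnegative since `f x₀` solves the projected AVI and `f x_e ∈ K̃`, and the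
`ε`-preservation at `x_e` replaces the left-hand side by `⟪x_e - x₀, w⟫` up to `ε‖x_e - x₀‖‖w‖`.
-/

open Matrix
open scoped RealInnerProductSpace

namespace Matrix

variable {m n : Type*} [Fintype m] [DecidableEq m] [Fintype n] [DecidableEq n]

theorem inner_toEuclideanLin_transpose (A : Matrix m n ℝ) (x : EuclideanSpace ℝ m)
    (y : EuclideanSpace ℝ n) :
    ⟪toEuclideanLin Aᵀ x, y⟫ = ⟪x, toEuclideanLin A y⟫ := by
  rw [← conjTranspose_eq_transpose_of_trivial, toEuclideanLin_conjTranspose_eq_adjoint,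
    LinearMap.adjoint_inner_left]

theorem inner_smul_toEuclideanLin_transpose_split (c : ℝ) (R : Matrix m n ℝ)
    (M : Matrix m m ℝ) (q x₀ v : EuclideanSpace ℝ m) :
    ⟪c • toEuclideanLin Rᵀ v, c • toEuclideanLin Rᵀ (q + toEuclideanLin M x₀)⟫ =
      ⟪c • toEuclideanLin Rᵀ v,
          toEuclideanLin (Rᵀ * M * R) (c • toEuclideanLin Rᵀ x₀) + c • toEuclideanLin Rᵀ q⟫
        + c ^ 2 * ⟪v, toEuclideanLin (R * Rᵀ * (M - M * R * Rᵀ)) x₀⟫ := by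
  simp only [toLpLin_mul_same, LinearMap.comp_apply, map_sub, LinearMap.sub_apply, map_add,
    map_smul, ← inner_toEuclideanLin_transpose R, inner_add_right, inner_sub_right,
    real_inner_smul_left, real_inner_smul_right]
  ring

end Matrix

theorem stmt_9_general (n k : ℕ)
    (K : Set (EuclideanSpace ℝ (Fin n)))
    (M : Matrix (Fin n) (Fin n) ℝ) (q : EuclideanSpace ℝ (Fin n))
    (R : Matrix (Fin n) (Fin k) ℝ)
    (f : EuclideanSpace ℝ (Fin n) → EuclideanSpace ℝ (Fin k))
    (hf : ∀ u, f u = Real.sqrt ((n : ℝ) / k) • Matrix.toEuclideanLin Rᵀ u)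
    (x₀ : EuclideanSpace ℝ (Fin n))
    (ε : ℝ)
    (hsol : ∀ ytil ∈ f '' K,
      ⟪ytil - f x₀, Matrix.toEuclideanLin (Rᵀ * M * R) (f x₀)
          + Real.sqrt ((n : ℝ) / k) • Matrix.toEuclideanLin Rᵀ q⟫ ≥ 0)
    (hpres : ∀ xe ∈ Set.extremePoints ℝ K,
      |⟪xe - x₀, q + Matrix.toEuclideanLin M x₀⟫
          - ⟪f (xe - x₀), f (q + Matrix.toEuclideanLin M x₀)⟫|
        ≤ ε * ‖xe - x₀‖ * ‖q + Matrix.toEuclideanLin M x₀‖) :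
    ∀ xe ∈ Set.extremePoints ℝ K,
      ⟪xe - x₀, q + Matrix.toEuclideanLin M x₀⟫ ≥
        ((n : ℝ) / k) * ⟪xe - x₀, Matrix.toEuclideanLin (R * Rᵀ * (M - M * R * Rᵀ)) x₀⟫
          - ε * ‖xe - x₀‖ * ‖q + Matrix.toEuclideanLin M x₀‖ := by
  intro xe hxe
  have hf_sub : f xe - f x₀ = f (xe - x₀) := by simp only [hf, map_sub, smul_sub]
  have hvi := hsol (f xe) ⟨xe, hxe.1, rfl⟩
  rw [hf_sub] at hvi
  have hsplit := inner_smul_toEuclideanLin_transpose_split (Real.sqrt ((n : ℝ) / k)) R M q x₀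
    (xe - x₀)
  rw [Real.sq_sqrt (by positivity), ← hf, ← hf, ← hf] at hsplit
  linarith [(abs_le.mp (hpres xe hxe)).1]

/-- **deterministic error bound for the preimage of the projected
solution.** With `f u = √(n/k) Rᵀ u`, `K̃ = f(K)`, `M̃ = RᵀMR`, `q̃ = √(n/k) Rᵀ q`,
`M' = MRRᵀ`: if `f x₀` solves `AVI(K̃, M̃, q̃)` and the inner products
`(x_e - x₀)ᵀ(q + Mx₀)` are `ε`-preserved by `f` at every extreme point `x_e` of `K`, then
`(x_e - x₀)ᵀ(q + Mx₀) ≥ (n/k)(x_e - x₀)ᵀRRᵀ(M - M')x₀ - ε‖x_e - x₀‖‖q + Mx₀‖`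
for every extreme point `x_e` of `K`. -/
theorem stmt_9 (n k : ℕ) (hk : 1 ≤ k) (hkn : k < n)
    (K : Set (EuclideanSpace ℝ (Fin n)))
    (hpoly : ∃ S : Finset (EuclideanSpace ℝ (Fin n)), K = convexHull ℝ (S : Set _))
    (M : Matrix (Fin n) (Fin n) ℝ) (q : EuclideanSpace ℝ (Fin n))
    (R : Matrix (Fin n) (Fin k) ℝ)
    (f : EuclideanSpace ℝ (Fin n) → EuclideanSpace ℝ (Fin k))
    (hf : ∀ u, f u = Real.sqrt ((n : ℝ) / k) • Matrix.toEuclideanLin Rᵀ u)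
    (x₀ : EuclideanSpace ℝ (Fin n)) (hx₀ : x₀ ∈ K)
    (ε : ℝ) (hε0 : 0 < ε) (hε1 : ε < 1)
    (hsol : ∀ ytil ∈ f '' K,
      ⟪ytil - f x₀, Matrix.toEuclideanLin (Rᵀ * M * R) (f x₀)
          + Real.sqrt ((n : ℝ) / k) • Matrix.toEuclideanLin Rᵀ q⟫ ≥ 0)
    (hpres : ∀ xe ∈ Set.extremePoints ℝ K,
      |⟪xe - x₀, q + Matrix.toEuclideanLin M x₀⟫
          - ⟪f (xe - x₀), f (q + Matrix.toEuclideanLin M x₀)⟫|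
        ≤ ε * ‖xe - x₀‖ * ‖q + Matrix.toEuclideanLin M x₀‖) :
    ∀ xe ∈ Set.extremePoints ℝ K,
      ⟪xe - x₀, q + Matrix.toEuclideanLin M x₀⟫ ≥
        ((n : ℝ) / k) * ⟪xe - x₀, Matrix.toEuclideanLin (R * Rᵀ * (M - M * R * Rᵀ)) x₀⟫
          - ε * ‖xe - x₀‖ * ‖q + Matrix.toEuclideanLin M x₀‖ :=
  stmt_9_general n k K M q R f hf x₀ ε hsol hpres
end
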